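/- arXiv:1504.02992 — 4 statements merged into one kernel-verified Lean document; each statement's English description precedes it below -/
import Mathlib

section
/- Let G = (V,D,B) be an acyclic mixed graph on V = [n], let Λ ∈ ℝ^D and Ω ∈ PD(B), and let Σ = (I−Λ)^{-T} Ω (I−Λ)^{-1}. Then for all v, w ∈ V, the entry Σ_{vw} equals the sum, over all treks π from v to w in G, of the trek monomial π(Λ,Ω). -/
open scoped Classical Matrix

/-- The directed part of the graph contains no directed cycle. -/
def Acyclic {n : ℕ} (D : Finset (Fin n × Fin n)) : Prop :=
  ∀ v : Fin n, ¬ Relation.TransGen (fun a b => (a, b) ∈ D) v v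

/-- Mixed graph axioms: the bidirected edge set is symmetric and there are no self loops. -/
def IsMixedGraph {n : ℕ} (D B : Finset (Fin n × Fin n)) : Prop :=
  (∀ v w : Fin n, (v, w) ∈ B → (w, v) ∈ B) ∧ ∀ v : Fin n, (v, v) ∉ D ∧ (v, v) ∉ B

/-- `IsTrek D B v w L R`: `L` is the left side of a trek from `v` to `w`, listed from the top
node down to the source `v` (consecutive vertices joined by directed edges pointing towards
`v`); `R` is the right side, listed from the top down to the target `w`.  Either the two tops
coincide (no bidirected edge) or they are joined by a bidirected edge. -/
def IsTrek {n : ℕ} (D B : Finset (Fin n × Fin n)) (v w : Fin n)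
    (L R : List (Fin n)) : Prop :=
  L ≠ [] ∧ R ≠ [] ∧
    L.Chain' (fun a b => (a, b) ∈ D) ∧ R.Chain' (fun a b => (a, b) ∈ D) ∧
    L.getLast? = some v ∧ R.getLast? = some w ∧
    (L.head? = R.head? ∨
      ∃ u z : Fin n, L.head? = some u ∧ R.head? = some z ∧ (u, z) ∈ B)

/-- Product of the matrix entries `Λ x y` over the consecutive pairs `(x, y)` of a list,
i.e. the product of the directed-edge coefficients along a directed path. -/
noncomputable def edgeProd {n : ℕ} (Λ : Matrix (Fin n) (Fin n) ℝ) :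
    List (Fin n) → ℝ
  | [] => 1
  | [_] => 1
  | x :: y :: rest => Λ x y * edgeProd Λ (y :: rest)

/-- The trek monomial of the trek with sides `L`, `R`. -/
noncomputable def trekWeight {n : ℕ} (Λ Ω : Matrix (Fin n) (Fin n) ℝ)
    (L R : List (Fin n)) : ℝ :=
  (match L.head?, R.head? with
    | some u, some z => Ω u z
    | _, _ => 0) * edgeProd Λ L * edgeProd Λ R

/-- `u` is an ancestor of `v`: there is a (possibly empty) directed path from `u` to `v`. -/
def IsAncestor {n : ℕ} (D : Finset (Fin n × Fin n)) (u v : Fin n) : Prop :=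
  Relation.ReflTransGen (fun a b => (a, b) ∈ D) u v

/-- `V'` is an ancestral subset: it contains all ancestors of its members. -/
def Ancestral {n : ℕ} (D : Finset (Fin n × Fin n)) (V' : Finset (Fin n)) : Prop :=
  ∀ u v : Fin n, IsAncestor D u v → v ∈ V' → u ∈ V'

/-- The parents of `v`. -/
def paF {n : ℕ} (D : Finset (Fin n × Fin n)) (v : Fin n) : Finset (Fin n) :=
  Finset.univ.filter fun w => (w, v) ∈ D

/-- `htr D B v`: the set of vertices `w ∉ {v} ∪ sib(v)` reachable from `v` by a half-trek. -/
def htr {n : ℕ} (D B : Finset (Fin n × Fin n)) (v : Fin n) : Set (Fin n) :=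
  {w | w ≠ v ∧ (v, w) ∉ B ∧ ∃ R, IsTrek D B v w [v] R}

/-- `Y` satisfies the half-trek criterion with respect to `v`: `|Y| = |pa(v)|`,
`Y ∩ ({v} ∪ sib(v)) = ∅`, and there is a system of half-treks with no sided intersection
from `Y` to `pa(v)` (given by a source `src p ∈ Y` and a right side `R p` for each parent
`p`, with pairwise distinct sources and pairwise disjoint right sides). -/
def SatisfiesHTC {n : ℕ} (D B : Finset (Fin n × Fin n)) (v : Fin n)
    (Y : Finset (Fin n)) : Prop :=
  Y.card = (paF D v).card ∧
    (∀ y ∈ Y, y ≠ v ∧ (y, v) ∉ B) ∧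
    ∃ (src : Fin n → Fin n) (R : Fin n → List (Fin n)),
      (∀ p ∈ paF D v, src p ∈ Y ∧ IsTrek D B (src p) p [src p] (R p)) ∧
      ∀ p ∈ paF D v, ∀ q ∈ paF D v, p ≠ q →
        src p ≠ src q ∧ ∀ x ∈ R p, x ∉ R q

/-- The parameter space `Θ = ℝ^D × PD(B)`. -/
def Theta {α : Type} [Fintype α] (D B : Set (α × α)) :
    Set (Matrix α α ℝ × Matrix α α ℝ) :=
  {p : Matrix α α ℝ × Matrix α α ℝ |
    (∀ v w : α, p.1 v w ≠ 0 → (v, w) ∈ D) ∧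
      p.2.PosDef ∧ ∀ v w : α, v ≠ w → p.2 v w ≠ 0 → (v, w) ∈ B}

/-- The parameterization map `φ(Λ, Ω) = (I - Λ)⁻ᵀ Ω (I - Λ)⁻¹`. -/
noncomputable def phi {α : Type} [Fintype α] [DecidableEq α]
    (p : Matrix α α ℝ × Matrix α α ℝ) : Matrix α α ℝ :=
  ((1 - p.1)⁻¹)ᵀ * p.2 * (1 - p.1)⁻¹

/-- Evaluation of a polynomial in the entries of the two parameter matrices. -/
noncomputable def polyEval {α : Type} [Fintype α]
    (f : MvPolynomial ((α × α) ⊕ (α × α)) ℝ)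
    (p : Matrix α α ℝ × Matrix α α ℝ) : ℝ :=
  MvPolynomial.eval (Sum.elim (fun e => p.1 e.1 e.2) (fun e => p.2 e.1 e.2)) f

/-- `A` is a proper algebraic subset of `Θ`: the intersection of `Θ` with the zero set of a
polynomial in the matrix entries that does not vanish identically on `Θ`. -/
def IsProperAlg {α : Type} [Fintype α]
    (Θ A : Set (Matrix α α ℝ × Matrix α α ℝ)) : Prop :=
  ∃ f : MvPolynomial ((α × α) ⊕ (α × α)) ℝ,
    (∃ p ∈ Θ, polyEval f p ≠ 0) ∧ A = {p ∈ Θ | polyEval f p = 0}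

/-- Generic identifiability: `φ` is injective off a proper algebraic subset. -/
def GenId {α : Type} [Fintype α] [DecidableEq α] (D B : Set (α × α)) : Prop :=
  ∃ A, IsProperAlg (Theta D B) A ∧
    ∀ p ∈ Theta D B \ A, ∀ q ∈ Theta D B \ A, phi p = phi q → p = q

/-- Generic identifiability of the single coefficient `λ_{uv}`. -/
def GenIdLambda {α : Type} [Fintype α] [DecidableEq α] (D B : Set (α × α))
    (u v : α) : Prop :=
  ∃ A, IsProperAlg (Theta D B) A ∧
    ∀ p ∈ Theta D B \ A, ∀ q ∈ Theta D B \ A, phi p = phi q → p.1 u v = q.1 u v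

/-- Generic identifiability of the single coefficient `ω_{uv}`. -/
def GenIdOmega {α : Type} [Fintype α] [DecidableEq α] (D B : Set (α × α))
    (u v : α) : Prop :=
  ∃ A, IsProperAlg (Theta D B) A ∧
    ∀ p ∈ Theta D B \ A, ∀ q ∈ Theta D B \ A, phi p = phi q → p.2 u v = q.2 u v

/-- Generic identifiability of the coefficient vector `Λ_{pa(v), v}`. -/
def GenIdCol {α : Type} [Fintype α] [DecidableEq α] (D B : Set (α × α))
    (v : α) : Prop :=
  ∃ A, IsProperAlg (Theta D B) A ∧
    ∀ p ∈ Theta D B \ A, ∀ q ∈ Theta D B \ A, phi p = phi q →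
      ∀ u : α, (u, v) ∈ D → p.1 u v = q.1 u v

/-- The fiber of the parameter point `p` within `Θ`. -/
def fiber {α : Type} [Fintype α] [DecidableEq α] (D B : Set (α × α))
    (p : Matrix α α ℝ × Matrix α α ℝ) :
    Set (Matrix α α ℝ × Matrix α α ℝ) :=
  {q ∈ Theta D B | phi q = phi p}

/-- Generically infinite-to-one. -/
def GenInfToOne {α : Type} [Fintype α] [DecidableEq α] (D B : Set (α × α)) : Prop :=
  ∃ A, IsProperAlg (Theta D B) A ∧
    ∀ p ∈ Theta D B \ A, (fiber D B p).Infinite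

/-- Generically `h`-to-one: every fiber off a proper algebraic subset has exactly `h` points. -/
def GenHToOne {α : Type} [Fintype α] [DecidableEq α] (D B : Set (α × α))
    (h : ℕ) : Prop :=
  ∃ A, IsProperAlg (Theta D B) A ∧
    ∀ p ∈ Theta D B \ A, (fiber D B p).Finite ∧ (fiber D B p).ncard = h

/-- `w` lies in the connected component of `c` in the bidirected part `(V, B)`. -/
def bidirConn {n : ℕ} (B : Finset (Fin n × Fin n)) (c w : Fin n) : Prop :=
  Relation.ReflTransGen (fun a b => (a, b) ∈ B) c w

/-- The connected component `C` of `c` in the bidirected part. -/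
noncomputable def Cset {n : ℕ} (B : Finset (Fin n × Fin n)) (c : Fin n) :
    Finset (Fin n) :=
  Finset.univ.filter (bidirConn B c)

/-- The vertex set `V_i = C_i ∪ pa(C_i)` of the mixed component of `c`. -/
noncomputable def Vset {n : ℕ} (D B : Finset (Fin n × Fin n)) (c : Fin n) :
    Finset (Fin n) :=
  Cset B c ∪ Finset.univ.filter fun v => ∃ w ∈ Cset B c, (v, w) ∈ D

/-- The directed edges `D_i = {(v, w) ∈ D : v ∈ V_i, w ∈ C_i}` of the mixed component of `c`. -/
def compD {n : ℕ} (D B : Finset (Fin n × Fin n)) (c : Fin n) :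
    Set (↥(Vset D B c) × ↥(Vset D B c)) :=
  {e | ((e.1 : Fin n), (e.2 : Fin n)) ∈ D ∧ (e.2 : Fin n) ∈ Cset B c}

/-- The bidirected edges `B_i = {(v, w) ∈ B : v, w ∈ C_i}` of the mixed component of `c`. -/
def compB {n : ℕ} (D B : Finset (Fin n × Fin n)) (c : Fin n) :
    Set (↥(Vset D B c) × ↥(Vset D B c)) :=
  {e | ((e.1 : Fin n), (e.2 : Fin n)) ∈ B ∧ (e.1 : Fin n) ∈ Cset B c ∧
    (e.2 : Fin n) ∈ Cset B c}

/-- The edges of the induced subgraph `G_{V'}`, as pairs of vertices of the subtype `V'`. -/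
def inducedE {n : ℕ} (E : Finset (Fin n × Fin n)) (V' : Finset (Fin n)) :
    Set (↥V' × ↥V') :=
  {e | ((e.1 : Fin n), (e.2 : Fin n)) ∈ E}


/-! Because `D` is acyclic, only finitely many lists are directed paths, so for every `u` and
`v` the weights of the paths from `u` to `v` have a finite sum `N u v`. If you split off the
first edge of each path you get `N = 1 + Λ N`, so `N = (1 - Λ)⁻¹`. Expanding `Nᵀ Ω N` then
gives a sum over pairs of paths with tops `u` and `z`, weighted by `ω_{uz}`. This weight
vanishes unless `u = z` or `u ↔ z`, which is exactly the condition for the pair to be a trek. -/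

open Finset

section TrekRule

variable {n : ℕ} {D B : Finset (Fin n × Fin n)} {Λ Ω : Matrix (Fin n) (Fin n) ℝ}
  {u v w z : Fin n} {L R : List (Fin n)}

def IsDirPath (D : Finset (Fin n × Fin n)) (u v : Fin n) (L : List (Fin n)) : Prop :=
  L.head? = some u ∧ L.IsChain (fun a b => (a, b) ∈ D) ∧ L.getLast? = some v

theorem Acyclic.nodup (hD : Acyclic D) (hL : L.IsChain fun a b => (a, b) ∈ D) : L.Nodup := by
  have hL' : L.Pairwise (Relation.TransGen fun a b => (a, b) ∈ D) :=
    (hL.imp fun _ _ h => .single h).pairwise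
  refine hL'.imp ?_
  rintro a _ hab rfl
  exact hD a hab

theorem isDirPath_cons_iff {a : Fin n} :
    IsDirPath D u v (a :: L) ↔
      a = u ∧ (L = [] ∧ u = v ∨ ∃ c, (u, c) ∈ D ∧ IsDirPath D c v L) := by
  cases L <;> simp [IsDirPath] <;> aesop

-- Filtering the duplicate-free lists makes finiteness evident; for acyclic `D` the filter
-- loses nothing (`mem_simplePaths`).
noncomputable def simplePaths (D : Finset (Fin n × Fin n)) (u v : Fin n) :
    Finset (List (Fin n)) :=
  (univ.map (Function.Embedding.subtype List.Nodup)).filter (IsDirPath D u v)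

theorem isDirPath_of_mem_simplePaths (h : L ∈ simplePaths D u v) : IsDirPath D u v L :=
  (mem_filter.1 h).2

theorem mem_simplePaths (hD : Acyclic D) : L ∈ simplePaths D u v ↔ IsDirPath D u v L := by
  simpa [simplePaths] using fun h : IsDirPath D u v L => hD.nodup h.2.1

theorem pairwiseDisjoint_simplePaths (s : Set (Fin n)) (v : Fin n) :
    s.PairwiseDisjoint (simplePaths D · v) := by
  intro u _ u' _ huu'
  refine disjoint_left.2 fun L hL hL' => huu' (Option.some_injective _ ?_)
  exact (isDirPath_of_mem_simplePaths hL).1.symm.trans (isDirPath_of_mem_simplePaths hL').1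

theorem simplePaths_eq_union (hD : Acyclic D) (u v : Fin n) :
    simplePaths D u v = (if u = v then {[u]} else ∅) ∪
      (univ.filter fun c => (u, c) ∈ D).biUnion fun c => (simplePaths D c v).image (u :: ·) := by
  ext (_ | ⟨a, L⟩)
  · split_ifs <;> simp [mem_simplePaths hD, IsDirPath]
  · split_ifs <;> simp [mem_simplePaths hD, isDirPath_cons_iff] <;> aesop

theorem edgeProd_cons {c : Fin n} (hL : L.head? = some c) :
    edgeProd Λ (u :: L) = Λ u c * edgeProd Λ L := by
  cases L with
  | nil => simp at hL
  | cons b L => obtain rfl := Option.some_injective _ hL; rfl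

theorem sum_simplePaths_edgeProd (hD : Acyclic D) (hΛ : ∀ a b, Λ a b ≠ 0 → (a, b) ∈ D)
    (u v : Fin n) :
    ∑ L ∈ simplePaths D u v, edgeProd Λ L =
      (if u = v then 1 else 0) + ∑ c, Λ u c * ∑ L ∈ simplePaths D c v, edgeProd Λ L := by
  have hdisj : Disjoint (if u = v then {[u]} else ∅)
      ((univ.filter fun c => (u, c) ∈ D).biUnion fun c => (simplePaths D c v).image (u :: ·)) := by
    split_ifs <;> simp [mem_simplePaths hD, IsDirPath]
  have hpw : (univ.filter fun c => (u, c) ∈ D : Set (Fin n)).PairwiseDisjoint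
      fun c => (simplePaths D c v).image (u :: ·) := fun c hc c' hc' hcc' =>
    (disjoint_image List.cons_injective).2 (pairwiseDisjoint_simplePaths _ v hc hc' hcc')
  rw [simplePaths_eq_union hD, sum_union hdisj, sum_biUnion hpw,
    apply_ite (∑ L ∈ ·, edgeProd Λ L)]
  congr 1
  · split_ifs <;> simp [edgeProd]
  · rw [← sum_filter_of_ne fun c _ hc => hΛ u c (left_ne_zero_of_mul hc)]
    refine sum_congr rfl fun c _ => ?_
    rw [sum_image List.cons_injective.injOn, mul_sum]
    exact sum_congr rfl fun L hL => edgeProd_cons (isDirPath_of_mem_simplePaths hL).1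

noncomputable def pathMatrix (D : Finset (Fin n × Fin n)) (Λ : Matrix (Fin n) (Fin n) ℝ) :
    Matrix (Fin n) (Fin n) ℝ :=
  Matrix.of fun u v => ∑ L ∈ simplePaths D u v, edgeProd Λ L

theorem pathMatrix_eq_one_add_mul (hD : Acyclic D) (hΛ : ∀ a b, Λ a b ≠ 0 → (a, b) ∈ D) :
    pathMatrix D Λ = 1 + Λ * pathMatrix D Λ := by
  ext u v
  simp only [pathMatrix, Matrix.add_apply, Matrix.mul_apply, Matrix.of_apply, Matrix.one_apply]
  exact sum_simplePaths_edgeProd hD hΛ u v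

theorem inv_one_sub_eq_pathMatrix (hD : Acyclic D) (hΛ : ∀ a b, Λ a b ≠ 0 → (a, b) ∈ D) :
    (1 - Λ)⁻¹ = pathMatrix D Λ :=
  Matrix.inv_eq_right_inv <| by
    rw [sub_mul, one_mul, sub_eq_iff_eq_add, ← pathMatrix_eq_one_add_mul hD hΛ]

theorem IsTrek.exists_isDirPath (h : IsTrek D B v w L R) :
    ∃ u z, IsDirPath D u v L ∧ IsDirPath D z w R := by
  obtain ⟨hL, hR, hLc, hRc, hLv, hRw, -⟩ := h
  exact ⟨_, _, ⟨List.head?_eq_some_head hL, hLc, hLv⟩, ⟨List.head?_eq_some_head hR, hRc, hRw⟩⟩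

theorem isTrek_iff_of_isDirPath (hL : IsDirPath D u v L) (hR : IsDirPath D z w R) :
    IsTrek D B v w L R ↔ u = z ∨ (u, z) ∈ B := by
  obtain ⟨hu, hLc, hLv⟩ := hL
  obtain ⟨hz, hRc, hRw⟩ := hR
  have hL : L ≠ [] := by rintro rfl; simp at hu
  have hR : R ≠ [] := by rintro rfl; simp at hz
  simp only [IsTrek, hu, hz, hL, hR, hLv, hRw, Option.some_inj, exists_and_left,
    exists_eq_left', ne_eq, not_false_eq_true, true_and]
  exact ⟨fun h => h.2.2, fun h => ⟨hLc, hRc, h⟩⟩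

theorem trekWeight_of_head? (hL : L.head? = some u) (hR : R.head? = some z) :
    trekWeight Λ Ω L R = Ω u z * edgeProd Λ L * edgeProd Λ R := by
  simp [trekWeight, hL, hR]

theorem tsum_trekWeight_eq (hD : Acyclic D) (hΩ : ∀ a b, a ≠ b → Ω a b ≠ 0 → (a, b) ∈ B)
    (v w : Fin n) :
    ∑' π : {p : List (Fin n) × List (Fin n) // IsTrek D B v w p.1 p.2},
        trekWeight Λ Ω π.1.1 π.1.2 =
      ∑ u, ∑ z, Ω u z * pathMatrix D Λ u v * pathMatrix D Λ z w := by
  set T := {p : List (Fin n) × List (Fin n) | IsTrek D B v w p.1 p.2}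
  set f := fun p : List (Fin n) × List (Fin n) => trekWeight Λ Ω p.1 p.2
  set P := fun x => univ.biUnion fun u => simplePaths D u x
  have hsupp : ∀ p ∉ P v ×ˢ P w, T.indicator f p = 0 := by
    refine fun p hp => Set.indicator_of_notMem (fun hT => hp ?_) f
    obtain ⟨u, z, hL, hR⟩ := IsTrek.exists_isDirPath hT
    simpa [P] using ⟨⟨u, (mem_simplePaths hD).2 hL⟩, ⟨z, (mem_simplePaths hD).2 hR⟩⟩
  have hterm : ∀ u z, ∀ L ∈ simplePaths D u v, ∀ R ∈ simplePaths D z w,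
      T.indicator f (L, R) = Ω u z * edgeProd Λ L * edgeProd Λ R := by
    intro u z L hL R hR
    have hL := isDirPath_of_mem_simplePaths hL
    have hR := isDirPath_of_mem_simplePaths hR
    by_cases hadj : u = z ∨ (u, z) ∈ B
    · rw [Set.indicator_of_mem (s := T) ((isTrek_iff_of_isDirPath hL hR).2 hadj)]
      exact trekWeight_of_head? hL.1 hR.1
    · rw [Set.indicator_of_notMem (s := T) (mt (isTrek_iff_of_isDirPath hL hR).1 hadj)]
      obtain ⟨hne, hnB⟩ := not_or.1 hadj
      rw [not_not.1 (mt (hΩ u z hne) hnB)]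
      ring
  refine (tsum_subtype T f).trans ?_
  rw [tsum_eq_sum hsupp, sum_product, sum_biUnion (pairwiseDisjoint_simplePaths _ v)]
  refine sum_congr rfl fun u _ => ?_
  calc ∑ L ∈ simplePaths D u v, ∑ R ∈ P w, T.indicator f (L, R)
      = ∑ L ∈ simplePaths D u v, ∑ z, ∑ R ∈ simplePaths D z w,
          Ω u z * edgeProd Λ L * edgeProd Λ R := by
        refine sum_congr rfl fun L hL => ?_
        rw [sum_biUnion (pairwiseDisjoint_simplePaths _ w)]
        exact sum_congr rfl fun z _ => sum_congr rfl fun R hR => hterm u z L hL R hR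
    _ = ∑ z, Ω u z * pathMatrix D Λ u v * pathMatrix D Λ z w := by
        rw [sum_comm]
        refine sum_congr rfl fun z _ => ?_
        simp only [pathMatrix, Matrix.of_apply, mul_assoc, ← mul_sum, ← sum_mul]

end TrekRule

theorem stmt1_general (n : ℕ) (D B : Finset (Fin n × Fin n))
    (hacyc : Acyclic D)
    (Λ Ω : Matrix (Fin n) (Fin n) ℝ)
    (hΛ : ∀ v w : Fin n, Λ v w ≠ 0 → (v, w) ∈ D)
    (hΩ : Ω.PosDef ∧ ∀ v w : Fin n, v ≠ w → Ω v w ≠ 0 → (v, w) ∈ B)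
    (v w : Fin n) :
    ((((1 - Λ)⁻¹)ᵀ * Ω * (1 - Λ)⁻¹ : Matrix (Fin n) (Fin n) ℝ)) v w =
      ∑' π : {p : List (Fin n) × List (Fin n) // IsTrek D B v w p.1 p.2},
        trekWeight Λ Ω π.1.1 π.1.2 := by
  rw [inv_one_sub_eq_pathMatrix hacyc hΛ, tsum_trekWeight_eq hacyc hΩ.2]
  simp only [Matrix.mul_apply, Matrix.transpose_apply, sum_mul]
  rw [sum_comm]
  exact sum_congr rfl fun u _ => sum_congr rfl fun z _ => by ring

theorem stmt1 (n : ℕ) (D B : Finset (Fin n × Fin n))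
    (hG : IsMixedGraph D B) (hacyc : Acyclic D)
    (Λ Ω : Matrix (Fin n) (Fin n) ℝ)
    (hΛ : ∀ v w : Fin n, Λ v w ≠ 0 → (v, w) ∈ D)
    (hΩ : Ω.PosDef ∧ ∀ v w : Fin n, v ≠ w → Ω v w ≠ 0 → (v, w) ∈ B)
    (v w : Fin n) :
    ((((1 - Λ)⁻¹)ᵀ * Ω * (1 - Λ)⁻¹ : Matrix (Fin n) (Fin n) ℝ)) v w =
      ∑' π : {p : List (Fin n) × List (Fin n) // IsTrek D B v w p.1 p.2},
        trekWeight Λ Ω π.1.1 π.1.2 :=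
  stmt1_general n D B hacyc Λ Ω hΛ hΩ v w
end

section
/- Let G = (V,D,B) be an acyclic mixed graph on V = [n], let V' ⊆ V be an ancestral subset, let Λ ∈ ℝ^D and Ω ∈ PD(B), and set Σ = (I−Λ)^{-T} Ω (I−Λ)^{-1}. Let Λ' and Ω' denote the V'×V' submatrices of Λ and Ω, and let Σ' = (I'−Λ')^{-T} Ω' (I'−Λ')^{-1}, where I' is the identity matrix indexed by V'. Then Σ_{vw} = Σ'_{vw} for all v, w ∈ V'; that is, the V'×V' principal submatrix of Σ equals Σ'. -/
open scoped Classical Matrix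

section myaux
variable {n : ℕ} {D : Finset (Fin n × Fin n)} {Λ : Matrix (Fin n) (Fin n) ℝ}
  (hΛ : ∀ v w : Fin n, Λ v w ≠ 0 → (v, w) ∈ D)

include hΛ in
lemma myaux_pow_anc : ∀ (k : ℕ) (u v : Fin n), (Λ ^ k) u v ≠ 0 → IsAncestor D u v := by
  intro k
  induction k with
  | zero =>
    intro u v h
    rw [pow_zero] at h
    by_cases huv : u = v
    · exact huv ▸ Relation.ReflTransGen.refl
    · exact absurd (Matrix.one_apply_ne huv) h
  | succ k ih =>
    intro u v h
    rw [pow_succ', Matrix.mul_apply] at h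
    obtain ⟨x, -, hx⟩ := Finset.exists_ne_zero_of_sum_ne_zero h
    exact Relation.ReflTransGen.head (hΛ u x (left_ne_zero_of_mul hx))
      (ih x v (right_ne_zero_of_mul hx))

include hΛ in
lemma myaux_chain : ∀ (k : ℕ) (u v : Fin n), (Λ ^ k) u v ≠ 0 →
    ∃ l : List (Fin n), l.Chain' (fun a b => (a, b) ∈ D) ∧ l.length = k + 1 ∧
      l.head? = some u := by
  intro k
  induction k with
  | zero => exact fun u v _ => ⟨[u], List.isChain_singleton u, rfl, rfl⟩
  | succ k ih =>
    intro u v h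
    rw [pow_succ', Matrix.mul_apply] at h
    obtain ⟨x, -, hx⟩ := Finset.exists_ne_zero_of_sum_ne_zero h
    obtain ⟨l, hl, hlen, hhead⟩ := ih x v (right_ne_zero_of_mul hx)
    refine ⟨u :: l, ?_, by simp [hlen], rfl⟩
    cases l with
    | nil => simp at hlen
    | cons a t =>
      simp only [List.head?_cons, Option.some.injEq] at hhead
      exact List.isChain_cons_cons.2 ⟨hhead ▸ hΛ u x (left_ne_zero_of_mul hx), hl⟩

include hΛ in
lemma myaux_nilp (hacyc : Acyclic D) : Λ ^ n = 0 := by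
  ext u v
  by_contra h
  obtain ⟨l, hl, hlen, -⟩ := myaux_chain hΛ n u v h
  have hnd : ¬ l.Nodup := by
    intro hnd
    have := hnd.length_le_card
    simp [hlen] at this
  obtain ⟨x, hx⟩ := List.exists_duplicate_iff_not_nodup.2 hnd
  have hsub : List.Sublist [x, x] l := List.duplicate_iff_sublist.1 hx
  have hl' : l.Chain' (Relation.TransGen (fun a b => (a, b) ∈ D)) :=
    hl.imp fun a b hab => Relation.TransGen.single hab
  have := (hl'.sublist hsub)
  simp [List.isChain_cons_cons] at this
  exact hacyc x this

end myaux

section myaux2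
variable {n : ℕ} {D : Finset (Fin n × Fin n)} {Λ : Matrix (Fin n) (Fin n) ℝ}
  (hΛ : ∀ v w : Fin n, Λ v w ≠ 0 → (v, w) ∈ D)
  {V' : Finset (Fin n)} (hanc : Ancestral D V')

include hΛ hanc in
lemma myaux_pow_sub :
    ∀ (k : ℕ) (u v : ↥V'),
      ((Λ.submatrix (Subtype.val : ↥V' → Fin n) Subtype.val) ^ k) u v
        = (Λ ^ k) (u : Fin n) (v : Fin n) := by
  intro k
  induction k with
  | zero =>
    intro u v
    by_cases h : u = v
    · subst h; simp [Matrix.one_apply]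
    · rw [pow_zero, pow_zero, Matrix.one_apply_ne h,
        Matrix.one_apply_ne (fun he => h (Subtype.ext he))]
  | succ k ih =>
    intro u v
    rw [pow_succ', pow_succ', Matrix.mul_apply, Matrix.mul_apply]
    have hzero : ∀ x ∈ Finset.univ, x ∉ V' → Λ (u : Fin n) x * (Λ ^ k) x (v : Fin n) = 0 := by
      intro x _ hx
      by_cases hz : (Λ ^ k) x (v : Fin n) = 0
      · rw [hz, mul_zero]
      · exact absurd (hanc x v (myaux_pow_anc hΛ k x v hz) v.2) hx
    calc (∑ x : ↥V', Λ.submatrix _ _ u x * ((Λ.submatrix _ _) ^ k) x v)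
        = ∑ x : ↥V', Λ (u : Fin n) (x : Fin n) * (Λ ^ k) (x : Fin n) (v : Fin n) := by
          refine Finset.sum_congr rfl fun x _ => ?_
          rw [ih x v]; rfl
      _ = ∑ x ∈ V', Λ (u : Fin n) x * (Λ ^ k) x (v : Fin n) :=
          Finset.sum_coe_sort V' (fun x => Λ (u : Fin n) x * (Λ ^ k) x (v : Fin n))
      _ = ∑ x : Fin n, Λ (u : Fin n) x * (Λ ^ k) x (v : Fin n) :=
          Finset.sum_subset (Finset.subset_univ V') hzero

include hΛ hanc in
lemma myaux_col (u v : Fin n) (hv : v ∈ V') (hu : u ∉ V') (k : ℕ) :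
    (Λ ^ k) u v = 0 := by
  by_contra hz
  exact hu (hanc u v (myaux_pow_anc hΛ k u v hz) hv)

end myaux2


theorem stmt4 (n : ℕ) (D B : Finset (Fin n × Fin n))
    (hG : IsMixedGraph D B) (hacyc : Acyclic D)
    (V' : Finset (Fin n)) (hanc : Ancestral D V')
    (Λ Ω : Matrix (Fin n) (Fin n) ℝ)
    (hΛ : ∀ v w : Fin n, Λ v w ≠ 0 → (v, w) ∈ D)
    (hΩ : Ω.PosDef ∧ ∀ v w : Fin n, v ≠ w → Ω v w ≠ 0 → (v, w) ∈ B)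
    (v w : Fin n) (hv : v ∈ V') (hw : w ∈ V') :
    ((((1 - Λ)⁻¹)ᵀ * Ω * (1 - Λ)⁻¹ : Matrix (Fin n) (Fin n) ℝ)) v w =
      ((((1 - Λ.submatrix (Subtype.val : ↥V' → Fin n) Subtype.val)⁻¹)ᵀ *
          Ω.submatrix (Subtype.val : ↥V' → Fin n) Subtype.val *
          (1 - Λ.submatrix (Subtype.val : ↥V' → Fin n) Subtype.val)⁻¹ :
            Matrix ↥V' ↥V' ℝ)) ⟨v, hv⟩ ⟨w, hw⟩ := by
  classical
  set Λ' := Λ.submatrix (Subtype.val : ↥V' → Fin n) Subtype.val with hL'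
  set S : Matrix (Fin n) (Fin n) ℝ := ∑ k ∈ Finset.range n, Λ ^ k with hSdef
  set S' : Matrix ↥V' ↥V' ℝ := ∑ k ∈ Finset.range n, Λ' ^ k with hS'def
  have hnil : Λ ^ n = 0 := myaux_nilp hΛ hacyc
  have hnil' : Λ' ^ n = 0 := by
    ext u z
    rw [hL', myaux_pow_sub hΛ hanc n u z, hnil]
    simp
  have hinv : (1 - Λ)⁻¹ = S := by
    apply Matrix.inv_eq_right_inv
    have h1 := mul_geom_sum Λ n
    rw [hnil] at h1
    have h2 : (1 - Λ) * S = -((Λ - 1) * (∑ k ∈ Finset.range n, Λ ^ k)) := by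
      rw [hSdef, ← neg_sub Λ 1, neg_mul]
    rw [h2, h1, zero_sub, neg_neg]
  have hinv' : (1 - Λ')⁻¹ = S' := by
    apply Matrix.inv_eq_right_inv
    have h1 := mul_geom_sum Λ' n
    rw [hnil'] at h1
    have h2 : (1 - Λ') * S' = -((Λ' - 1) * (∑ k ∈ Finset.range n, Λ' ^ k)) := by
      rw [hS'def, ← neg_sub Λ' 1, neg_mul]
    rw [h2, h1, zero_sub, neg_neg]
  have hSsub : ∀ u z : ↥V', S' u z = S (u : Fin n) (z : Fin n) := by
    intro u z
    rw [hS'def, hSdef, Matrix.sum_apply, Matrix.sum_apply]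
    exact Finset.sum_congr rfl fun k _ => myaux_pow_sub hΛ hanc k u z
  have hScol : ∀ u : Fin n, u ∉ V' → ∀ z ∈ V', S u z = 0 := by
    intro u hu z hz
    rw [hSdef, Matrix.sum_apply]
    exact Finset.sum_eq_zero fun k _ => myaux_col hΛ hanc u z hz hu k
  rw [hinv, hinv']
  simp only [Matrix.mul_apply, Matrix.transpose_apply]
  calc (∑ j : Fin n, (∑ i : Fin n, S i v * Ω i j) * S j w)
      = ∑ j ∈ V', (∑ i : Fin n, S i v * Ω i j) * S j w :=
        (Finset.sum_subset (Finset.subset_univ V')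
          (fun j _ hj => by rw [hScol j hj w hw, mul_zero])).symm
    _ = ∑ j ∈ V', (∑ i ∈ V', S i v * Ω i j) * S j w :=
        Finset.sum_congr rfl fun j _ => by
          rw [← Finset.sum_subset (Finset.subset_univ V')
            (fun i _ hi => by rw [hScol i hi v hv, zero_mul])]
    _ = ∑ j : ↥V', (∑ i : ↥V', S (i : Fin n) v * Ω (i : Fin n) (j : Fin n)) *
          S (j : Fin n) w := by
        rw [← Finset.sum_coe_sort V'
          (fun j => (∑ i ∈ V', S i v * Ω i j) * S j w)]
        exact Finset.sum_congr rfl fun j _ => by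
          rw [← Finset.sum_coe_sort V' (fun i => S i v * Ω i (j : Fin n))]
    _ = ∑ j : ↥V', (∑ i : ↥V', S' i ⟨v, hv⟩ * Ω (i : Fin n) (j : Fin n)) *
          S' j ⟨w, hw⟩ := by
        refine Finset.sum_congr rfl fun j _ => ?_
        rw [hSsub j ⟨w, hw⟩]
        refine congrArg (· * _) (Finset.sum_congr rfl fun i _ => ?_)
        rw [hSsub i ⟨v, hv⟩]
    _ = _ := rfl
end

section
/- Let G = (V,D,B) be an acyclic mixed graph and let V' ⊆ V be an ancestral subset. If the induced subgraph G_{V'} is generically identifiable, then all edge coefficients of G corresponding to edges of G_{V'} are generically identifiable in G; that is, there is a proper algebraic subset A of Θ_G such that for any two parameter pairs (Λ,Ω), (Λ̃,Ω̃) ∈ Θ_G ∖ A with φ_G(Λ,Ω) = φ_G(Λ̃,Ω̃), one has λ_{vw} = λ̃_{vw} for all (v,w) ∈ D with v,w ∈ V' and ω_{vw} = ω̃_{vw} for all v,w ∈ V'. -/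
open scoped Classical Matrix

/-! For an ancestral set `V'` no directed edge enters `V'` from outside, so `I - Λ`, and hence
`(I - Λ)⁻¹`, is block triangular with respect to `V'`, and the `V' × V'` block of `φ_G(Λ, Ω)` is
`φ_{G_{V'}}` evaluated at the `V' × V'` blocks of `Λ` and `Ω`. Generic injectivity of
`φ_{G_{V'}}` therefore recovers these blocks off the preimage of the exceptional set of `G_{V'}`
under restriction. That preimage is cut out by the same polynomial in the restricted entries, and
it is proper because every parameter of `G_{V'}` extends to one of `G` (by `Λ = 0` and `Ω = I`
off `V'`). -/

namespace Matrix

variable {ι R : Type*}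

section BlockTriangular

variable [Fintype ι] [CommRing R] (s : Finset ι)

theorem toBlock_mul_of_apply_eq_zero {A B : Matrix ι ι R} (hB : ∀ k ∉ s, ∀ j ∈ s, B k j = 0) :
    (A * B).toBlock (· ∈ s) (· ∈ s) =
      A.toBlock (· ∈ s) (· ∈ s) * B.toBlock (· ∈ s) (· ∈ s) := by
  ext i j
  show (A * B) i j = ∑ k : s, A i k * B k j
  rw [mul_apply, Finset.sum_coe_sort s fun k => A i k * B k j]
  exact (Finset.sum_subset (Finset.subset_univ s) fun k _ hk => by
    rw [hB k hk j j.2, mul_zero]).symm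

theorem toBlock_transpose_mul_mul_of_apply_eq_zero {N : Matrix ι ι R} (Ω : Matrix ι ι R)
    (hN : ∀ k ∉ s, ∀ j ∈ s, N k j = 0) :
    (Nᵀ * Ω * N).toBlock (· ∈ s) (· ∈ s) =
      (N.toBlock (· ∈ s) (· ∈ s))ᵀ * Ω.toBlock (· ∈ s) (· ∈ s) * N.toBlock (· ∈ s) (· ∈ s) := by
  have hleft : (Nᵀ * Ω).toBlock (· ∈ s) (· ∈ s) = ((Ωᵀ * N).toBlock (· ∈ s) (· ∈ s))ᵀ := by
    rw [← transpose_transpose (Nᵀ * Ω), transpose_mul, transpose_transpose]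
    rfl
  rw [toBlock_mul_of_apply_eq_zero s hN, hleft, toBlock_mul_of_apply_eq_zero s hN, transpose_mul]
  rfl

variable [DecidableEq ι]

theorem isUnit_det_one_sub_of_acyclic {r : ι → ι → Prop} (hr : ∀ v, ¬ Relation.TransGen r v v)
    {Λ : Matrix ι ι R} (hΛ : ∀ v w, Λ v w ≠ 0 → r v w) : IsUnit (1 - Λ).det := by
  classical
  let height : ι → ℕ := fun v => (Finset.univ.filter fun u => Relation.TransGen r u v).card
  have height_lt : ∀ v w, r v w → height v < height w := fun v w hvw => by
    refine Finset.card_lt_card ((Finset.ssubset_iff_of_subset fun u hu => ?_).2 ⟨v, ?_, ?_⟩)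
    · simp only [Finset.mem_filter, Finset.mem_univ, true_and] at hu ⊢
      exact hu.tail hvw
    · simpa using Relation.TransGen.single hvw
    · simpa using hr v
  have htri : (1 - Λ).BlockTriangular height := fun i j hji => by
    have hij : i ≠ j := by rintro rfl; exact lt_irrefl _ hji
    simp only [sub_apply, one_apply_ne hij, zero_sub, neg_eq_zero]
    exact not_not.1 fun hvw => (height_lt i j (hΛ i j hvw)).not_gt hji
  have hblock : ∀ k, (1 - Λ).toSquareBlock height k = 1 := fun k => by
    ext ⟨i, hi⟩ ⟨j, hj⟩
    have hΛij : Λ i j = 0 :=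
      not_not.1 fun hvw => (height_lt i j (hΛ i j hvw)).ne (hi.trans hj.symm)
    simp [toSquareBlock_def, one_apply, hΛij]
  rw [htri.det, Finset.prod_eq_one fun k _ => by rw [hblock, det_one]]
  exact isUnit_one

theorem inv_apply_eq_zero_of_apply_eq_zero {M : Matrix ι ι R}
    (hM : ∀ k ∉ s, ∀ j ∈ s, M k j = 0) : ∀ k ∉ s, ∀ j ∈ s, M⁻¹ k j = 0 := by
  by_cases hdet : IsUnit M.det
  · have := M.invertibleOfIsUnitDet hdet
    -- `Prop` is ordered by `False < True`, so this is the vanishing of the `sᶜ × s` block.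
    have htri : M.BlockTriangular (· ∉ s) := fun k j hjk => by
      simp only [lt_iff_le_not_ge, le_Prop_eq, Classical.not_imp, not_not] at hjk
      exact hM k hjk.2.1 j hjk.2.2
    intro k hk j hj
    exact blockTriangular_inv_of_blockTriangular htri (by simp [lt_iff_le_not_ge, hk, hj])
  · intro k _ j _
    rw [nonsing_inv_apply_not_isUnit M hdet, zero_apply]

theorem toBlock_inv_of_apply_eq_zero {M : Matrix ι ι R} (hdet : IsUnit M.det)
    (hM : ∀ k ∉ s, ∀ j ∈ s, M k j = 0) :
    M⁻¹.toBlock (· ∈ s) (· ∈ s) = (M.toBlock (· ∈ s) (· ∈ s))⁻¹ := by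
  refine (inv_eq_right_inv ?_).symm
  rw [← toBlock_mul_of_apply_eq_zero s (inv_apply_eq_zero_of_apply_eq_zero s hM),
    mul_nonsing_inv M hdet, toBlock_one_self]

end BlockTriangular

section FromBlocksCompl

open scoped ComplexOrder

variable [DecidableEq ι] (s : Finset ι)

def fromBlocksCompl [Zero R] (A : Matrix s s R) (D : Matrix {i // i ∉ s} {i // i ∉ s} R) :
    Matrix ι ι R :=
  (fromBlocks A 0 0 D).submatrix (Equiv.sumCompl (· ∈ s)).symm (Equiv.sumCompl (· ∈ s)).symm

variable {s}

@[simp]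
theorem toBlock_fromBlocksCompl [Zero R] (A : Matrix s s R)
    (D : Matrix {i // i ∉ s} {i // i ∉ s} R) :
    (fromBlocksCompl s A D).toBlock (· ∈ s) (· ∈ s) = A := by
  ext i j
  simp [fromBlocksCompl]

theorem fromBlocksCompl_ne_zero [Zero R] {A : Matrix s s R}
    {D : Matrix {i // i ∉ s} {i // i ∉ s} R} {i j : ι} (h : fromBlocksCompl s A D i j ≠ 0) :
    (∃ (hi : i ∈ s) (hj : j ∈ s), A ⟨i, hi⟩ ⟨j, hj⟩ ≠ 0) ∨
      ∃ (hi : i ∉ s) (hj : j ∉ s), D ⟨i, hi⟩ ⟨j, hj⟩ ≠ 0 := by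
  by_cases hi : i ∈ s <;> by_cases hj : j ∈ s <;>
    simp_all [fromBlocksCompl, Equiv.sumCompl_symm_apply_of_pos, Equiv.sumCompl_symm_apply_of_neg]

theorem PosDef.fromBlocks_zero {m n 𝕜 : Type*} [Fintype m] [Fintype n] [DecidableEq m]
    [DecidableEq n] [RCLike 𝕜] {A : Matrix m m 𝕜} {D : Matrix n n 𝕜} (hA : A.PosDef)
    (hD : D.PosDef) : (fromBlocks A 0 0 D).PosDef := by
  have := hA.isUnit.invertible
  have hsemi : (fromBlocks A 0 0 D).PosSemidef := by
    simpa using (PosDef.fromBlocks₁₁ 0 D hA).2 (by simpa using hD.posSemidef)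
  exact hsemi.posDef_iff_isUnit.2 (isUnit_fromBlocks_zero₂₁.2 ⟨hA.isUnit, hD.isUnit⟩)

theorem PosDef.fromBlocksCompl [Fintype ι] {𝕜 : Type*} [RCLike 𝕜] {A : Matrix s s 𝕜}
    {D : Matrix {i // i ∉ s} {i // i ∉ s} 𝕜} (hA : A.PosDef) (hD : D.PosDef) :
    (Matrix.fromBlocksCompl s A D).PosDef :=
  (hA.fromBlocks_zero hD).submatrix (Equiv.sumCompl (· ∈ s)).symm.injective

end FromBlocksCompl

end Matrix

section Restriction

open Matrix

variable {α : Type} (s : Finset α)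

def restrictParams (p : Matrix α α ℝ × Matrix α α ℝ) : Matrix s s ℝ × Matrix s s ℝ :=
  (p.1.toBlock (· ∈ s) (· ∈ s), p.2.toBlock (· ∈ s) (· ∈ s))

def extendParams [DecidableEq α] (p : Matrix s s ℝ × Matrix s s ℝ) :
    Matrix α α ℝ × Matrix α α ℝ :=
  (fromBlocksCompl s p.1 0, fromBlocksCompl s p.2 1)

variable {s}

@[simp]
theorem restrictParams_extendParams [DecidableEq α] (p : Matrix s s ℝ × Matrix s s ℝ) :
    restrictParams s (extendParams s p) = p := by
  simp [restrictParams, extendParams]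

theorem restrictParams_mem_theta [Fintype α] {D B : Set (α × α)}
    {p : Matrix α α ℝ × Matrix α α ℝ} (hp : p ∈ Theta D B) :
    restrictParams s p ∈ Theta (Prod.map (↑) (↑) ⁻¹' D) (Prod.map (↑) (↑) ⁻¹' B) := by
  obtain ⟨hΛ, hΩ, hΩB⟩ := hp
  exact ⟨fun v w h => hΛ v w h, hΩ.submatrix Subtype.val_injective,
    fun v w hvw h => hΩB v w (Subtype.val_injective.ne hvw) h⟩

theorem extendParams_mem_theta [Fintype α] [DecidableEq α] {D B : Set (α × α)}
    {p : Matrix s s ℝ × Matrix s s ℝ}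
    (hp : p ∈ Theta (Prod.map (↑) (↑) ⁻¹' D) (Prod.map (↑) (↑) ⁻¹' B)) :
    extendParams s p ∈ Theta D B := by
  obtain ⟨hΛ, hΩ, hΩB⟩ := hp
  refine ⟨fun v w h => ?_, hΩ.fromBlocksCompl PosDef.one, fun v w hvw h => ?_⟩
  · rcases fromBlocksCompl_ne_zero h with ⟨hv, hw, h⟩ | ⟨_, _, h⟩
    · exact hΛ ⟨v, hv⟩ ⟨w, hw⟩ h
    · exact (h rfl).elim
  · rcases fromBlocksCompl_ne_zero h with ⟨hv, hw, h⟩ | ⟨_, _, h⟩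
    · exact hΩB ⟨v, hv⟩ ⟨w, hw⟩ (fun h => hvw (congrArg Subtype.val h)) h
    · exact absurd (one_apply_ne fun h => hvw (congrArg Subtype.val h)) h

theorem polyEval_rename_subtypeVal [Fintype α] (f : MvPolynomial ((s × s) ⊕ (s × s)) ℝ)
    (p : Matrix α α ℝ × Matrix α α ℝ) :
    polyEval (MvPolynomial.rename (Sum.map (Prod.map (↑) (↑)) (Prod.map (↑) (↑))) f) p =
      polyEval f (restrictParams s p) := by
  rw [polyEval, polyEval, MvPolynomial.eval_rename]
  congr 2
  funext e
  rcases e with e | e <;> rfl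

theorem IsProperAlg.preimage_restrictParams [Fintype α] [DecidableEq α] {D B : Set (α × α)}
    {A : Set (Matrix s s ℝ × Matrix s s ℝ)}
    (hA : IsProperAlg (Theta (Prod.map (↑) (↑) ⁻¹' D) (Prod.map (↑) (↑) ⁻¹' B)) A) :
    IsProperAlg (Theta D B) {p ∈ Theta D B | restrictParams s p ∈ A} := by
  obtain ⟨f, ⟨p₀, hp₀, hfp₀⟩, rfl⟩ := hA
  refine ⟨MvPolynomial.rename (Sum.map (Prod.map (↑) (↑)) (Prod.map (↑) (↑))) f,
    ⟨extendParams s p₀, extendParams_mem_theta hp₀, ?_⟩, ?_⟩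
  · rwa [polyEval_rename_subtypeVal, restrictParams_extendParams]
  · ext p
    simp only [Set.mem_ofPred_eq, polyEval_rename_subtypeVal]
    exact ⟨fun ⟨hp, _, h⟩ => ⟨hp, h⟩, fun ⟨hp, h⟩ => ⟨hp, restrictParams_mem_theta hp, h⟩⟩

theorem toBlock_phi [Fintype α] [DecidableEq α] {p : Matrix α α ℝ × Matrix α α ℝ}
    (hdet : IsUnit (1 - p.1).det) (hp : ∀ k ∉ s, ∀ j ∈ s, p.1 k j = 0) :
    (phi p).toBlock (· ∈ s) (· ∈ s) = phi (restrictParams s p) := by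
  have hM : ∀ k ∉ s, ∀ j ∈ s, (1 - p.1) k j = 0 := fun k hk j hj => by
    rw [Matrix.sub_apply, one_apply_ne (show k ≠ j by rintro rfl; exact hk hj), hp k hk j hj,
      sub_zero]
  have hsub : (1 - p.1).toBlock (· ∈ s) (· ∈ s) = 1 - p.1.toBlock (· ∈ s) (· ∈ s) := by
    rw [← toBlock_one_self (· ∈ s)]
    rfl
  rw [phi, phi, toBlock_transpose_mul_mul_of_apply_eq_zero s _
    (inv_apply_eq_zero_of_apply_eq_zero s hM), toBlock_inv_of_apply_eq_zero s hdet hM, hsub]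
  rfl

end Restriction

theorem Ancestral.apply_eq_zero {n : ℕ} {D : Finset (Fin n × Fin n)} {V' : Finset (Fin n)}
    (hanc : Ancestral D V') {Λ : Matrix (Fin n) (Fin n) ℝ}
    (hΛ : ∀ v w, Λ v w ≠ 0 → (v, w) ∈ D) : ∀ k ∉ V', ∀ j ∈ V', Λ k j = 0 := fun k hk j hj =>
  not_not.1 fun h => hk (hanc k j (.single (hΛ k j h)) hj)

theorem toBlock_phi_of_ancestral {n : ℕ} {D : Finset (Fin n × Fin n)} (hacyc : Acyclic D)
    {V' : Finset (Fin n)} (hanc : Ancestral D V')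
    {p : Matrix (Fin n) (Fin n) ℝ × Matrix (Fin n) (Fin n) ℝ}
    (hp : ∀ v w, p.1 v w ≠ 0 → (v, w) ∈ D) :
    (phi p).toBlock (· ∈ V') (· ∈ V') = phi (restrictParams V' p) :=
  toBlock_phi (Matrix.isUnit_det_one_sub_of_acyclic (r := fun a b => (a, b) ∈ D) hacyc hp)
    (hanc.apply_eq_zero hp)

theorem stmt5_general (n : ℕ) (D B : Finset (Fin n × Fin n))
    (hacyc : Acyclic D)
    (V' : Finset (Fin n)) (hanc : Ancestral D V')
    (hsub : GenId (inducedE D V') (inducedE B V')) :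
    ∃ A, IsProperAlg (Theta (↑D : Set (Fin n × Fin n)) ↑B) A ∧
      ∀ p ∈ Theta (↑D : Set (Fin n × Fin n)) ↑B \ A,
        ∀ q ∈ Theta (↑D : Set (Fin n × Fin n)) ↑B \ A, phi p = phi q →
          (∀ v w : Fin n, v ∈ V' → w ∈ V' → (v, w) ∈ D → p.1 v w = q.1 v w) ∧
            ∀ v w : Fin n, v ∈ V' → w ∈ V' → p.2 v w = q.2 v w := by
  obtain ⟨A', hA', hinj⟩ := hsub
  refine ⟨_, hA'.preimage_restrictParams, ?_⟩
  rintro p ⟨hp, hpA⟩ q ⟨hq, hqA⟩ hpq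
  have hrestrict : restrictParams V' p = restrictParams V' q :=
    hinj _ ⟨restrictParams_mem_theta hp, fun h => hpA ⟨hp, h⟩⟩
      _ ⟨restrictParams_mem_theta hq, fun h => hqA ⟨hq, h⟩⟩
      (by rw [← toBlock_phi_of_ancestral hacyc hanc hp.1,
        ← toBlock_phi_of_ancestral hacyc hanc hq.1, hpq])
  obtain ⟨hΛ, hΩ⟩ := Prod.ext_iff.1 hrestrict
  exact ⟨fun v w hv hw _ => congrFun₂ hΛ ⟨v, hv⟩ ⟨w, hw⟩,
    fun v w hv hw => congrFun₂ hΩ ⟨v, hv⟩ ⟨w, hw⟩⟩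

theorem stmt5 (n : ℕ) (D B : Finset (Fin n × Fin n))
    (hG : IsMixedGraph D B) (hacyc : Acyclic D)
    (V' : Finset (Fin n)) (hanc : Ancestral D V')
    (hsub : GenId (inducedE D V') (inducedE B V')) :
    ∃ A, IsProperAlg (Theta (↑D : Set (Fin n × Fin n)) ↑B) A ∧
      ∀ p ∈ Theta (↑D : Set (Fin n × Fin n)) ↑B \ A,
        ∀ q ∈ Theta (↑D : Set (Fin n × Fin n)) ↑B \ A, phi p = phi q →
          (∀ v w : Fin n, v ∈ V' → w ∈ V' → (v, w) ∈ D → p.1 v w = q.1 v w) ∧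
            ∀ v w : Fin n, v ∈ V' → w ∈ V' → p.2 v w = q.2 v w :=
  stmt5_general n D B hacyc V' hanc hsub
end

section
/- Let G = (V,D,B) be an acyclic mixed graph, let v ∈ V, and suppose Y ⊆ V satisfies the half-trek criterion with respect to v in G. Let V' ⊆ V be any ancestral subset with {v} ∪ Y ⊆ V'. Then Y satisfies the half-trek criterion with respect to v in the induced subgraph G_{V'}. -/
open scoped Classical Matrix

/-!
Because `V'` is ancestral and contains `v`, it contains `pa(v)` and, walking backwards along
directed edges, the whole right side of every half-trek ending in `pa(v)`; the sources lie in
`Y ⊆ V'`. So the given half-trek system already lives in `G_{V'}`, and `pa(v)` is unchanged there.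
-/

section InducedSubgraph

variable {n : ℕ} {D B : Finset (Fin n × Fin n)} {V' : Finset (Fin n)}

theorem Ancestral.mem_of_edge (hanc : Ancestral D V') {u w : Fin n} (huw : (u, w) ∈ D)
    (hw : w ∈ V') : u ∈ V' :=
  hanc u w (.single huw) hw

theorem Ancestral.forall_mem_of_chain (hanc : Ancestral D V') {R : List (Fin n)} {w : Fin n}
    (hR : R.IsChain fun a b => (a, b) ∈ D) (hlast : R.getLast? = some w) (hw : w ∈ V') :
    ∀ x ∈ R, x ∈ V' :=
  hR.backwards_induction _ _ (fun _ _ hxy hy => hanc.mem_of_edge hxy hy) fun hne => by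
    rwa [List.getLast_eq_iff_getLast?_eq_some hne |>.mpr hlast]

theorem Ancestral.paF_filter (hanc : Ancestral D V') {v : Fin n} (hv : v ∈ V') :
    paF (D.filter fun e => e.1 ∈ V' ∧ e.2 ∈ V') v = paF D v := by
  ext w
  simp only [paF, Finset.mem_filter, Finset.mem_univ, true_and, and_iff_left_iff_imp]
  exact fun hwv => ⟨hanc.mem_of_edge hwv hv, hv⟩

theorem IsTrek.induce {v w : Fin n} {L R : List (Fin n)} (h : IsTrek D B v w L R)
    (hL : ∀ x ∈ L, x ∈ V') (hR : ∀ x ∈ R, x ∈ V') :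
    IsTrek (D.filter fun e => e.1 ∈ V' ∧ e.2 ∈ V') (B.filter fun e => e.1 ∈ V' ∧ e.2 ∈ V')
      v w L R := by
  obtain ⟨hLne, hRne, hcL, hcR, hlastL, hlastR, htop⟩ := h
  refine ⟨hLne, hRne, hcL.imp_of_mem_imp fun a b ha hb hab => ?_,
    hcR.imp_of_mem_imp fun a b ha hb hab => ?_, hlastL, hlastR, ?_⟩
  · exact Finset.mem_filter.mpr ⟨hab, hL a ha, hL b hb⟩
  · exact Finset.mem_filter.mpr ⟨hab, hR a ha, hR b hb⟩
  · refine htop.imp_right fun ⟨u, z, hu, hz, huz⟩ => ⟨u, z, hu, hz, ?_⟩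
    exact Finset.mem_filter.mpr
      ⟨huz, hL u (List.mem_of_mem_head? hu), hR z (List.mem_of_mem_head? hz)⟩

theorem IsTrek.induce_of_ancestral {y w : Fin n} {R : List (Fin n)}
    (h : IsTrek D B y w [y] R) (hanc : Ancestral D V') (hy : y ∈ V') (hw : w ∈ V') :
    IsTrek (D.filter fun e => e.1 ∈ V' ∧ e.2 ∈ V') (B.filter fun e => e.1 ∈ V' ∧ e.2 ∈ V')
      y w [y] R :=
  have ⟨_, _, _, hcR, _, hlastR, _⟩ := h
  h.induce (by simpa using hy) (hanc.forall_mem_of_chain hcR hlastR hw)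

end InducedSubgraph

theorem stmt13_general (n : ℕ) (D B : Finset (Fin n × Fin n))
    (v : Fin n) (Y : Finset (Fin n)) (hY : SatisfiesHTC D B v Y)
    (V' : Finset (Fin n)) (hanc : Ancestral D V')
    (hv : v ∈ V') (hYsub : ∀ y ∈ Y, y ∈ V') :
    SatisfiesHTC (D.filter fun e => e.1 ∈ V' ∧ e.2 ∈ V')
      (B.filter fun e => e.1 ∈ V' ∧ e.2 ∈ V') v Y := by
  obtain ⟨hcard, hYv, src, R, htrek, hdisj⟩ := hY
  rw [SatisfiesHTC, hanc.paF_filter hv]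
  have hYv' : ∀ y ∈ Y, y ≠ v ∧ (y, v) ∉ B.filter fun e => e.1 ∈ V' ∧ e.2 ∈ V' :=
    fun y hy => ⟨(hYv y hy).1, fun hyv => (hYv y hy).2 (Finset.mem_filter.mp hyv).1⟩
  refine ⟨hcard, hYv', src, R, fun p hp => ?_, hdisj⟩
  obtain ⟨hsrc, hp_trek⟩ := htrek p hp
  have hpV' : p ∈ V' := hanc.mem_of_edge (Finset.mem_filter.mp hp).2 hv
  exact ⟨hsrc, hp_trek.induce_of_ancestral hanc (hYsub _ hsrc) hpV'⟩

theorem stmt13 (n : ℕ) (D B : Finset (Fin n × Fin n))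
    (hG : IsMixedGraph D B) (hacyc : Acyclic D)
    (v : Fin n) (Y : Finset (Fin n)) (hY : SatisfiesHTC D B v Y)
    (V' : Finset (Fin n)) (hanc : Ancestral D V')
    (hv : v ∈ V') (hYsub : ∀ y ∈ Y, y ∈ V') :
    SatisfiesHTC (D.filter fun e => e.1 ∈ V' ∧ e.2 ∈ V')
      (B.filter fun e => e.1 ∈ V' ∧ e.2 ∈ V') v Y :=
  stmt13_general n D B v Y hY V' hanc hv hYsub
end
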